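/- arXiv:2005.00467 — 11 statements merged into one kernel-verified Lean document; each statement's English description precedes it below -/
import Mathlib

section
/- Every finite nonabelian group of odd order admits an abelian partition. -/
/-!
Since `G` has odd order, no element other than `1` is its own inverse, so `G ∖ {1}` splits into
the inverse pairs `{a, a⁻¹}`, each of which is commutative. Adding `1`, which is central, to the
pair of one nontrivial element gives an abelian partition.
-/

/-- An abelian partition of a group `G`: a family of `n` pairwise disjoint sets covering `G`,
each of size at least 2 and consisting of pairwise commuting elements. -/
def IsAbelianPartition {G : Type*} [Group G] {n : ℕ} (A : Fin n → Set G) : Prop :=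
  (∀ i, 2 ≤ (A i).ncard) ∧ (⋃ i, A i) = Set.univ ∧
    Pairwise (Function.onFun Disjoint A) ∧
    ∀ i, ∀ x ∈ A i, ∀ y ∈ A i, x * y = y * x

/-- The minimal number of parts in an abelian partition of `G` (0 if none exists). -/
noncomputable def apDegree (G : Type*) [Group G] : ℕ :=
  sInf {n | ∃ A : Fin n → Set G, IsAbelianPartition A}

/-- The maximal size of a noncommuting subset of `G`. -/
noncomputable def maxNoncommuting (G : Type*) [Group G] : ℕ :=
  sSup {k | ∃ S : Set G, S.ncard = k ∧ ∀ x ∈ S, ∀ y ∈ S, x ≠ y → x * y ≠ y * x}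

section

variable {G : Type*} [Group G]

theorem exists_isAbelianPartition_of_setoid [Finite G] (s : Setoid G)
    (two_le_ncard : ∀ a, 2 ≤ {b | s b a}.ncard) (commute_of_rel : ∀ a b, s a b → Commute a b) :
    ∃ (n : ℕ) (A : Fin n → Set G), IsAbelianPartition A := by
  let e := Finite.equivFin (Quotient s)
  refine ⟨_, fun i => Quotient.mk s ⁻¹' {e.symm i}, fun i => ?_, ?_, ?_, ?_⟩
  · obtain ⟨a, ha⟩ := Quotient.exists_rep (e.symm i)
    simpa only [← ha, Set.preimage, Set.mem_singleton_iff, Quotient.eq] using two_le_ncard a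
  · exact Set.eq_univ_of_forall fun g => Set.mem_iUnion.mpr ⟨e ⟦g⟧, by simp⟩
  · exact fun i j hij =>
      (Set.disjoint_singleton.mpr (e.symm.injective.ne hij)).preimage _
  · intro i a ha b hb
    exact commute_of_rel a b (Quotient.exact (ha.trans hb.symm))

theorem eq_one_of_inv_eq_self_of_odd_card (hodd : Odd (Nat.card G)) {a : G} (h : a⁻¹ = a) :
    a = 1 := by
  obtain ⟨k, hk⟩ := hodd
  have hsq : a ^ 2 = 1 := by rw [sq]; nth_rw 1 [← h]; exact inv_mul_cancel a
  calc a = (a ^ 2) ^ k * a := by rw [hsq, one_pow, one_mul]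
    _ = a ^ Nat.card G := by rw [← pow_mul, ← pow_succ, ← hk]
    _ = 1 := pow_card_eq_one'

theorem pair_inv_eq_pair_inv_iff {a b : G} :
    ({a, a⁻¹} : Set G) = {b, b⁻¹} ↔ a = b ∨ a = b⁻¹ := by
  rw [Set.pair_eq_pair_iff, inv_inj, inv_eq_iff_eq_inv]
  tauto

open Classical in
def invPairSetoid (x : G) : Setoid G :=
  Setoid.ker fun a => ({if a = 1 then x else a, (if a = 1 then x else a)⁻¹} : Set G)

theorem commute_of_invPairSetoid {x a b : G} (h : invPairSetoid x a b) : Commute a b := by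
  by_cases ha : a = 1
  · exact ha ▸ Commute.one_left b
  by_cases hb : b = 1
  · exact hb ▸ Commute.one_right a
  rw [invPairSetoid, Setoid.ker_def, if_neg ha, if_neg hb, pair_inv_eq_pair_inv_iff] at h
  rcases h with rfl | rfl
  exacts [Commute.refl a, (Commute.refl b).inv_left]

open Classical in
theorem two_le_ncard_invPairSetoid_class [Finite G] (hodd : Odd (Nat.card G)) {x : G}
    (hx : x ≠ 1) (a : G) : 2 ≤ {b | invPairSetoid x b a}.ncard := by
  set r := if a = 1 then x else a with hr
  have hr1 : r ≠ 1 := by split_ifs at hr with ha <;> rwa [hr]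
  have hsub : {r, r⁻¹} ⊆ {b | invPairSetoid x b a} := by
    intro b hb
    have hb1 : b ≠ 1 := by rcases hb with rfl | rfl; exacts [hr1, inv_ne_one.mpr hr1]
    rw [Set.mem_ofPred_eq, invPairSetoid, Setoid.ker_def, if_neg hb1, ← hr,
      pair_inv_eq_pair_inv_iff]
    exact hb
  calc 2 = ({r, r⁻¹} : Set G).ncard :=
        (Set.ncard_pair fun h => hr1 (eq_one_of_inv_eq_self_of_odd_card hodd h.symm)).symm
    _ ≤ _ := Set.ncard_le_ncard hsub

end

theorem odd_order_nonabelian_is_AP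
    {G : Type*} [Group G] [Finite G]
    (hna : ∃ x y : G, x * y ≠ y * x)
    (hodd : Odd (Nat.card G)) :
    ∃ (n : ℕ) (A : Fin n → Set G), IsAbelianPartition A := by
  obtain ⟨x, y, hxy⟩ := hna
  have hx : x ≠ 1 := by rintro rfl; simp at hxy
  exact exists_isAbelianPartition_of_setoid (invPairSetoid x)
    (two_le_ncard_invPairSetoid_class hodd hx) fun _ _ => commute_of_invPairSetoid
end

section
/- If {a_1, ..., a_k} is a set of pairwise commuting elements of a finite group G with k strictly greater than the minimal abelian partition size ϑ_a(G), then G equals the union over all 1 ≤ i < j ≤ k of the centralizers C_G(a_i⁻¹ a_j). -/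
/-!
Translate the commuting set by `g`: the `k` elements `g * a i` lie in the `apDegree G` parts of a
minimal abelian partition, so by pigeonhole two of them, `g * a i` and `g * a j`, share a part and
commute. Since `a i` and `a j` commute, `g a_i g a_j = g a_j g a_i` rearranges to
`g (a_i⁻¹ a_j) = (a_i⁻¹ a_j) g`.
-/

theorem exists_isAbelianPartition_apDegree {G : Type*} [Group G]
    (h : ∃ (n : ℕ) (A : Fin n → Set G), IsAbelianPartition A) :
    ∃ A : Fin (apDegree G) → Set G, IsAbelianPartition A :=
  Nat.sInf_mem h

theorem IsAbelianPartition.exists_lt_commute {G : Type*} [Group G] {n k : ℕ}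
    {A : Fin n → Set G} (hA : IsAbelianPartition A) (x : Fin k → G) (hk : n < k) :
    ∃ i j, i < j ∧ Commute (x i) (x j) := by
  obtain ⟨-, hcover, -, habel⟩ := hA
  have hpart : ∀ i, ∃ p, x i ∈ A p := fun i => Set.mem_iUnion.mp (hcover ▸ Set.mem_univ (x i))
  choose part hpart using hpart
  obtain ⟨i, j, hij, hsame⟩ := Fintype.exists_ne_map_eq_of_card_lt part (by simpa using hk)
  have hc : Commute (x i) (x j) := habel (part j) _ (hsame ▸ hpart i) _ (hpart j)
  rcases hij.lt_or_gt with hlt | hlt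
  · exact ⟨i, j, hlt, hc⟩
  · exact ⟨j, i, hlt, hc.symm⟩

theorem commute_inv_mul_of_commute_mul_left {G : Type*} [Group G] {a b g : G}
    (hab : Commute a b) (h : Commute (g * a) (g * b)) : Commute g (a⁻¹ * b) := by
  have h' : a * (g * b) = b * (g * a) :=
    mul_left_cancel (a := g) (by simpa only [mul_assoc] using h.eq)
  calc g * (a⁻¹ * b) = g * (b * a⁻¹) := by rw [hab.inv_left.eq]
    _ = a⁻¹ * (a * (g * b)) * a⁻¹ := by group
    _ = a⁻¹ * (b * (g * a)) * a⁻¹ := by rw [h']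
    _ = a⁻¹ * b * g := by group

theorem union_of_centralizers_of_large_commuting_set_general
    {G : Type*} [Group G]
    (hap : ∃ (n : ℕ) (A : Fin n → Set G), IsAbelianPartition A)
    {k : ℕ} (a : Fin k → G)
    (hcomm : ∀ i j, a i * a j = a j * a i)
    (hk : apDegree G < k) :
    ∀ g : G, ∃ i j : Fin k, i < j ∧
      g * ((a i)⁻¹ * a j) = ((a i)⁻¹ * a j) * g := by
  intro g
  obtain ⟨A, hA⟩ := exists_isAbelianPartition_apDegree hap
  obtain ⟨i, j, hij, hc⟩ := hA.exists_lt_commute (fun i => g * a i) hk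
  exact ⟨i, j, hij, commute_inv_mul_of_commute_mul_left (hcomm i j) hc⟩

theorem union_of_centralizers_of_large_commuting_set
    {G : Type*} [Group G] [Finite G]
    (hap : ∃ (n : ℕ) (A : Fin n → Set G), IsAbelianPartition A)
    {k : ℕ} (a : Fin k → G) (hinj : Function.Injective a)
    (hcomm : ∀ i j, a i * a j = a j * a i)
    (hk : apDegree G < k) :
    ∀ g : G, ∃ i j : Fin k, i < j ∧
      g * ((a i)⁻¹ * a j) = ((a i)⁻¹ * a j) * g :=
  union_of_centralizers_of_large_commuting_set_general hap a hcomm hk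
end

section
/- Let G be a finite nonabelian group, Z(G) its center, and A an abelian subgroup of G of maximal order. Then ϑ_a(G) ≤ [G : Z(G)] − [A : Z(G)] + 1, i.e., G admits an abelian partition with at most [G:Z(G)] − [A:Z(G)] + 1 parts. -/
open scoped Pointwise

/-- Any abelian partition of a finite group has at most `|G|/2` parts. -/
lemma two_mul_le_of_isAbelianPartition {G : Type*} [Group G] [Finite G] {n : ℕ}
    {P : Fin n → Set G} (hP : IsAbelianPartition P) : 2 * n ≤ Nat.card G := by
  classical
  obtain ⟨hsize, hcover, hdisj, -⟩ := hP
  haveI : Fintype G := Fintype.ofFinite G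
  have hF : ∀ i, (P i).toFinset.card = (P i).ncard := by
    intro i
    rw [Set.ncard_eq_toFinset_card']
  have hdisjF : ∀ i ∈ (Finset.univ : Finset (Fin n)), ∀ j ∈ (Finset.univ : Finset (Fin n)),
      i ≠ j → Disjoint (P i).toFinset (P j).toFinset := by
    intro i _ j _ hij
    rw [Finset.disjoint_left]
    intro a ha hb
    rw [Set.mem_toFinset] at ha hb
    exact (hdisj hij).le_bot ⟨ha, hb⟩ 
  have hunion : (Finset.univ : Finset (Fin n)).biUnion (fun i => (P i).toFinset) =
      Finset.univ := by
    ext g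
    simp only [Finset.mem_biUnion, Finset.mem_univ, true_and, Set.mem_toFinset,
      iff_true]
    have : g ∈ ⋃ i, P i := by rw [hcover]; trivial
    simpa using this
  have hsum := Finset.card_biUnion hdisjF
  rw [hunion, Finset.card_univ] at hsum
  have h2 : 2 * n ≤ ∑ i : Fin n, (P i).toFinset.card := by
    calc 2 * n = ∑ _i : Fin n, 2 := by simp [mul_comm]
    _ ≤ ∑ i : Fin n, (P i).toFinset.card := by
        apply Finset.sum_le_sum
        intro i _
        rw [hF i]; exact hsize i
  rw [Nat.card_eq_fintype_card]
  omega

theorem apDegree_le_index_sub_relindex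
    {G : Type*} [Group G] [Finite G]
    (hna : ∃ x y : G, x * y ≠ y * x)
    (A : Subgroup G) (habA : ∀ x ∈ A, ∀ y ∈ A, x * y = y * x)
    (hmax : ∀ B : Subgroup G, (∀ x ∈ B, ∀ y ∈ B, x * y = y * x) →
      Nat.card B ≤ Nat.card A) :
    apDegree G ≤ (Subgroup.center G).index - (Subgroup.center G).relIndex A + 1 := by
  classical
  set Z := Subgroup.center G with hZdef
  -- Z ≤ A
  have hZle : Z ≤ A := by
    have hcomm : ∀ x ∈ Z ⊔ A, ∀ y ∈ Z ⊔ A, x * y = y * x := by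
      have h1 : Z ⊔ A ≤ Subgroup.centralizer ((Z ⊔ A : Subgroup G) : Set G) := by
        refine sup_le (Subgroup.center_le_centralizer _) ?_
        intro a ha
        rw [Subgroup.mem_centralizer_iff]
        intro h hh
        have hh' : h ∈ Z ⊔ A := hh
        have h2 : Z ⊔ A ≤ Subgroup.centralizer {a} := by
          refine sup_le (Subgroup.center_le_centralizer _) ?_
          intro b hb
          rw [Subgroup.mem_centralizer_iff]
          intro c hc
          rw [Set.mem_singleton_iff] at hc
          rw [hc]
          exact habA a ha b hb
        have := h2 hh'
        rw [Subgroup.mem_centralizer_iff] at this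
        exact (this a rfl).symm
      intro x hx y hy
      have := h1 hy
      rw [Subgroup.mem_centralizer_iff] at this
      exact this x hx
    have hcard := hmax (Z ⊔ A) hcomm
    have heq : A = Z ⊔ A := Subgroup.eq_of_le_of_card_ge le_sup_right hcard
    rw [heq]
    exact le_sup_left
  -- A is proper
  have hAne : A ≠ ⊤ := by
    intro h
    obtain ⟨x, y, hxy⟩ := hna
    exact hxy (habA x (h ▸ Subgroup.mem_top x) y (h ▸ Subgroup.mem_top y))
  have hAindex : 2 ≤ A.index := by
    have h0 : A.index ≠ 0 := Subgroup.index_ne_zero_of_finite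
    have h1 : A.index ≠ 1 := fun h => hAne (Subgroup.index_eq_one.mp h)
    omega
  have h2A : 2 * Nat.card A ≤ Nat.card G := by
    have := Subgroup.index_mul_card A
    calc 2 * Nat.card A ≤ A.index * Nat.card A := by
          exact Nat.mul_le_mul_right _ hAindex
    _ = Nat.card G := this
  rcases le_or_gt (Nat.card Z) 1 with hZ1 | hZ2
  · -- Z is trivial
    have hZpos : 0 < Nat.card Z := Nat.card_pos
    have hZcard : Nat.card Z = 1 := le_antisymm hZ1 hZpos
    have hZbot : Z = ⊥ := Subgroup.eq_bot_of_card_eq Z hZcard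
    rw [hZbot, Subgroup.index_bot, Subgroup.relIndex_bot_left]
    by_cases hS : {n | ∃ P : Fin n → Set G, IsAbelianPartition P}.Nonempty
    · obtain ⟨n, P, hP⟩ := hS
      have h1 : apDegree G ≤ n := Nat.sInf_le ⟨P, hP⟩
      have h2 := two_mul_le_of_isAbelianPartition hP
      omega
    · rw [Set.not_nonempty_iff_eq_empty] at hS
      rw [apDegree, hS, Nat.sInf_empty]
      exact Nat.zero_le _
  · -- Z has at least 2 elements; build the explicit partition
    have hZA : Nat.card Z ≤ Nat.card A := Subgroup.card_le_of_le hZle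
    set n := Z.index - Z.relIndex A + 1 with hn
    set T : Set (G ⧸ Z) := (QuotientGroup.mk '' (A : Set G))ᶜ with hT
    -- cardinality of the image
    have himg : ((QuotientGroup.mk : G → G ⧸ Z) '' (A : Set G)).ncard = Z.relIndex A := by
      have hset : ((QuotientGroup.mk : G → G ⧸ Z) '' (A : Set G)) =
          ((A.map (QuotientGroup.mk' Z) : Subgroup (G ⧸ Z)) : Set (G ⧸ Z)) := by
        rw [Subgroup.coe_map]; rfl
      rw [hset, ← Nat.card_coe_set_eq]
      have hidx : (A.map (QuotientGroup.mk' Z)).index = A.index :=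
        Subgroup.index_map_eq A (QuotientGroup.mk'_surjective Z)
          (by rw [QuotientGroup.ker_mk']; exact hZle)
      have hc1 : (A.map (QuotientGroup.mk' Z)).index *
          Nat.card (A.map (QuotientGroup.mk' Z)) = Nat.card (G ⧸ Z) :=
        Subgroup.index_mul_card _
      have hc2 : Z.relIndex A * A.index = Z.index := Subgroup.relIndex_mul_index hZle
      have hc3 : Z.index = Nat.card (G ⧸ Z) := Subgroup.index_eq_card Z
      rw [hidx] at hc1
      have hAidx0 : A.index ≠ 0 := Subgroup.index_ne_zero_of_finite
      have : A.index * Nat.card (A.map (QuotientGroup.mk' Z)) =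
          A.index * Z.relIndex A := by
        rw [hc1, ← hc3, ← hc2, mul_comm]
      have hcard := Nat.eq_of_mul_eq_mul_left (Nat.pos_of_ne_zero hAidx0) this
      simp only [SetLike.coe_sort_coe]
      exact hcard
    have hTadd : ((QuotientGroup.mk : G → G ⧸ Z) '' (A : Set G)).ncard + T.ncard = Nat.card (G ⧸ Z) :=
      Set.ncard_add_ncard_compl _
    have hQcard : Nat.card (G ⧸ Z) = Z.index := (Subgroup.index_eq_card Z).symm
    have hTcard : T.ncard = Z.index - Z.relIndex A := by omega
    have hrel_le : Z.relIndex A ≤ Z.index := by omega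
    -- index type
    haveI : Finite (G ⧸ Z) := Quotient.finite _
    haveI : Fintype ↥T := Fintype.ofFinite _
    have hOcard : Nat.card (Option ↥T) = n := by
      rw [Finite.card_option, Nat.card_coe_set_eq, hTcard]
    let e : Option ↥T ≃ Fin n := Finite.equivFinOfCardEq hOcard
    -- the parts
    let P' : Option ↥T → Set G := fun o =>
      match o with
      | none => (A : Set G)
      | some q => QuotientGroup.mk ⁻¹' {(q : G ⧸ Z)}
    -- membership facts
    have hmemA : ∀ g : G, g ∉ A → (QuotientGroup.mk g : G ⧸ Z) ∈ T := by
      intro g hg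
      intro hmem
      obtain ⟨a, ha, heq⟩ := hmem
      have : a⁻¹ * g ∈ Z := QuotientGroup.eq.mp heq
      have : a⁻¹ * g ∈ A := hZle this
      have : a * (a⁻¹ * g) ∈ A := A.mul_mem ha this
      rw [← mul_assoc, mul_inv_cancel, one_mul] at this
      exact hg this
    have hsize : ∀ o, 2 ≤ (P' o).ncard := by
      intro o
      match o with
      | none =>
        show 2 ≤ (A : Set G).ncard
        rw [← Nat.card_coe_set_eq]
        calc 2 ≤ Nat.card Z := hZ2
        _ ≤ Nat.card A := hZA
      | some q =>
        show 2 ≤ (QuotientGroup.mk ⁻¹' {(q : G ⧸ Z)}).ncard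
        obtain ⟨g, hg⟩ := QuotientGroup.mk_surjective (q : G ⧸ Z)
        have hcoset : QuotientGroup.mk ⁻¹' {(q : G ⧸ Z)} = g • (Z : Set G) := by
          ext x
          simp only [Set.mem_preimage, Set.mem_singleton_iff,
            Set.mem_smul_set_iff_inv_smul_mem, smul_eq_mul]
          rw [← hg]
          constructor
          · intro h
            exact QuotientGroup.eq.mp h.symm
          · intro h
            exact (QuotientGroup.eq.mpr h).symm
        rw [hcoset, Set.ncard_smul_set, ← Nat.card_coe_set_eq]
        exact hZ2
    have hcover : ∀ g : G, ∃ o, g ∈ P' o := by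
      intro g
      by_cases hg : g ∈ A
      · exact ⟨none, hg⟩
      · exact ⟨some ⟨QuotientGroup.mk g, hmemA g hg⟩, rfl⟩
    have hdisj : Pairwise (Function.onFun Disjoint P') := by
      have key : ∀ q : ↥T, Disjoint (P' none) (P' (some q)) := by
        intro q
        rw [Set.disjoint_left]
        intro x hx hq
        have : (QuotientGroup.mk x : G ⧸ Z) = (q : G ⧸ Z) := hq
        have : (q : G ⧸ Z) ∈ QuotientGroup.mk '' (A : Set G) := ⟨x, hx, this⟩
        exact q.2 this
      intro o o' hne
      match o, o' with
      | none, none => exact absurd rfl hne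
      | none, some q => exact key q
      | some q, none => exact (key q).symm
      | some q, some q' =>
        have hqq : (q : G ⧸ Z) ≠ (q' : G ⧸ Z) := by
          intro h
          exact hne (congrArg some (Subtype.ext h))
        rw [Function.onFun]
        rw [Set.disjoint_left]
        intro x hx hx'
        exact hqq ((hx : QuotientGroup.mk x = _).symm.trans (hx' : QuotientGroup.mk x = _))
    have hab : ∀ o, ∀ x ∈ P' o, ∀ y ∈ P' o, x * y = y * x := by
      intro o
      match o with
      | none => exact habA
      | some q =>
        intro x hx y hy
        have hxy : (QuotientGroup.mk x : G ⧸ Z) = QuotientGroup.mk y := by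
          rw [(hx : QuotientGroup.mk x = _), (hy : QuotientGroup.mk y = _)]
        have hz : x⁻¹ * y ∈ Z := QuotientGroup.eq.mp hxy
        set z := x⁻¹ * y with hzdef
        have hxz : x * z = z * x := Subgroup.mem_center_iff.mp hz x
        have hyx : y = x * z := by rw [hzdef]; group
        rw [hyx]
        calc x * (x * z) = x * (z * x) := by rw [hxz]
        _ = x * z * x := (mul_assoc x z x).symm
    -- transfer along e
    set P : Fin n → Set G := fun i => P' (e.symm i) with hPdef
    have hPart : IsAbelianPartition P := by
      refine ⟨fun i => hsize _, ?_, ?_, fun i => hab _⟩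
      · rw [Set.eq_univ_iff_forall]
        intro g
        obtain ⟨o, ho⟩ := hcover g
        rw [Set.mem_iUnion]
        exact ⟨e o, by simpa [hPdef] using ho⟩
      · intro i j hij
        exact hdisj (fun h => hij (by rw [← e.apply_symm_apply i, h, e.apply_symm_apply]))
    exact Nat.sInf_le ⟨P, hPart⟩
end

section
/- Let G be a finite group and a_1, ..., a_n elements of G such that each centralizer C_G(a_i) is abelian. Suppose G = A_1 ⊎ A_2 ⊎ ... ⊎ A_n is an abelian partition with A_1 = C_G(a_1) and A_i = C_G(a_i) \ Z(G) for i ≥ 2. Then this partition is minimal, i.e., every abelian partition of G has at least n parts. -/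
/-!
The representatives `a i` pairwise do not commute: if `a i` commutes with `a j` for some
`j ≠ 0`, then `a i ∈ C(a j)`, and commutativity of `C(a j)` gives `C(a j) ⊆ C(a i)`; hence the
nonempty part `A j = C(a j) \ Z(G)` lies inside `A i`, contradicting disjointness. Pairwise
noncommuting elements must lie in distinct parts of any abelian partition, so every abelian
partition has at least `n` parts.
-/

theorem IsAbelianPartition.eq_of_subset {G : Type*} [Group G] {n : ℕ} {A : Fin n → Set G}
    (hA : IsAbelianPartition A) {i j : Fin n} (h : A j ⊆ A i) : i = j := by
  by_contra hij
  obtain ⟨x, hx⟩ := Set.nonempty_of_ncard_ne_zero (by have := hA.1 j; omega : (A j).ncard ≠ 0)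
  exact (hA.2.2.1 hij).ne_of_mem (h hx) hx rfl

theorem IsAbelianPartition.le_of_pairwise_not_commute {G : Type*} [Group G] {m n : ℕ}
    {B : Fin m → Set G} (hB : IsAbelianPartition B) {a : Fin n → G}
    (ha : Pairwise fun i j => ¬Commute (a i) (a j)) : n ≤ m := by
  have hmem : ∀ i, ∃ j, a i ∈ B j := fun i => Set.mem_iUnion.mp (hB.2.1 ▸ Set.mem_univ _)
  choose f hf using hmem
  have hf_inj : Function.Injective f := fun i j hij => by
    by_contra hne
    exact ha hne (hB.2.2.2 _ _ (hf i) _ (hij ▸ hf j))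
  simpa using Fintype.card_le_of_injective f hf_inj

theorem centralizer_singleton_le_of_commute {G : Type*} [Group G] {x y : G}
    (hy : ∀ u ∈ Subgroup.centralizer {y}, ∀ v ∈ Subgroup.centralizer {y}, u * v = v * u)
    (h : Commute x y) : Subgroup.centralizer {y} ≤ Subgroup.centralizer {x} := by
  intro u hu
  rw [Subgroup.mem_centralizer_singleton_iff]
  exact hy u hu x (Subgroup.mem_centralizer_singleton_iff.mpr h)

theorem centralizer_partition_is_minimal_general
    {G : Type*} [Group G]
    {n : ℕ} (hn : 0 < n) (a : Fin n → G)
    (habel : ∀ i, ∀ x ∈ Subgroup.centralizer {a i}, ∀ y ∈ Subgroup.centralizer {a i},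
      x * y = y * x)
    (A : Fin n → Set G) (hA : IsAbelianPartition A)
    (h1 : A ⟨0, hn⟩ = (Subgroup.centralizer {a ⟨0, hn⟩} : Set G))
    (hi : ∀ i : Fin n, i ≠ ⟨0, hn⟩ →
      A i = (Subgroup.centralizer {a i} : Set G) \ (Subgroup.center G : Set G)) :
    ∀ (m : ℕ) (B : Fin m → Set G), IsAbelianPartition B → n ≤ m := by
  intro m B hB
  have hA_supset : ∀ i, (Subgroup.centralizer {a i} : Set G) \ Subgroup.center G ⊆ A i := by
    intro i
    by_cases hi0 : i = ⟨0, hn⟩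
    · subst hi0
      rw [h1]
      exact Set.sdiff_subset
    · rw [hi i hi0]
  have heq_of_commute : ∀ i j, j ≠ ⟨0, hn⟩ → Commute (a i) (a j) → i = j := by
    intro i j hj h
    apply hA.eq_of_subset
    rw [hi j hj]
    exact (Set.sdiff_subset_sdiff_left
      (centralizer_singleton_le_of_commute (habel j) h)).trans (hA_supset i)
  refine hB.le_of_pairwise_not_commute (a := a) fun i j hij h => hij ?_
  by_cases hj : j = ⟨0, hn⟩
  · exact (heq_of_commute j i (fun hi0 => hij (hi0.trans hj.symm)) h.symm).symm
  · exact heq_of_commute i j hj h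

theorem centralizer_partition_is_minimal
    {G : Type*} [Group G] [Finite G]
    {n : ℕ} (hn : 0 < n) (a : Fin n → G)
    (habel : ∀ i, ∀ x ∈ Subgroup.centralizer {a i}, ∀ y ∈ Subgroup.centralizer {a i},
      x * y = y * x)
    (A : Fin n → Set G) (hA : IsAbelianPartition A)
    (h1 : A ⟨0, hn⟩ = (Subgroup.centralizer {a ⟨0, hn⟩} : Set G))
    (hi : ∀ i : Fin n, i ≠ ⟨0, hn⟩ →
      A i = (Subgroup.centralizer {a i} : Set G) \ (Subgroup.center G : Set G)) :
    ∀ (m : ℕ) (B : Fin m → Set G), IsAbelianPartition B → n ≤ m :=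
  centralizer_partition_is_minimal_general hn a habel A hA h1 hi
end

section
/- Let G be a finite group with a minimal abelian partition A_1 ⊎ ... ⊎ A_m where m ≥ 3. Then no part A_i is contained in the center Z(G). -/
def absorbPart {α : Type*} {n : ℕ} (A : Fin (n + 1) → Set α) (i : Fin (n + 1)) (k : Fin n) :
    Fin n → Set α :=
  Function.update (A ∘ i.succAbove) k (A (i.succAbove k) ∪ A i)

section absorbPart

variable {α : Type*} {n : ℕ} {A : Fin (n + 1) → Set α} {i : Fin (n + 1)} {k : Fin n}

@[simp]
theorem absorbPart_self : absorbPart A i k k = A (i.succAbove k) ∪ A i :=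
  Function.update_self ..

theorem absorbPart_of_ne {l : Fin n} (hl : l ≠ k) : absorbPart A i k l = A (i.succAbove l) :=
  Function.update_of_ne hl ..

theorem iUnion_absorbPart : ⋃ l, absorbPart A i k l = ⋃ l, A l := by
  apply Set.Subset.antisymm
  · refine Set.iUnion_subset fun l => ?_
    rcases eq_or_ne l k with rfl | hl
    · simp only [absorbPart_self]
      exact Set.union_subset (Set.subset_iUnion A _) (Set.subset_iUnion A i)
    · rw [absorbPart_of_ne hl]
      exact Set.subset_iUnion A _
  · refine Set.iUnion_subset fun l => ?_
    rcases eq_or_ne l i with rfl | hl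
    · refine subset_trans ?_ (Set.subset_iUnion _ k)
      simp only [absorbPart_self, Set.subset_union_right]
    · obtain ⟨l', rfl⟩ := Fin.exists_succAbove_eq hl
      refine subset_trans ?_ (Set.subset_iUnion _ l')
      rcases eq_or_ne l' k with rfl | hl'
      · simp only [absorbPart_self, Set.subset_union_left]
      · rw [absorbPart_of_ne hl']

theorem pairwise_disjoint_absorbPart (hA : Pairwise (Function.onFun Disjoint A)) :
    Pairwise (Function.onFun Disjoint (absorbPart A i k)) := by
  have hsucc : Pairwise (Function.onFun Disjoint (A ∘ i.succAbove)) :=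
    hA.comp_of_injective Fin.succAbove_right_injective
  have hi : ∀ l, Disjoint (A (i.succAbove l)) (A i) := fun l => hA (Fin.succAbove_ne i l)
  intro l l' hll'
  rcases eq_or_ne l k with rfl | hl
  · rw [Function.onFun, absorbPart_self, absorbPart_of_ne hll'.symm]
    exact (hsucc hll').union_left (hi l').symm
  rcases eq_or_ne l' k with rfl | hl'
  · rw [Function.onFun, absorbPart_self, absorbPart_of_ne hl]
    exact (hsucc hll').union_right (hi l)
  rw [Function.onFun, absorbPart_of_ne hl, absorbPart_of_ne hl']
  exact hsucc hll'

end absorbPart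

namespace IsAbelianPartition

variable {G : Type*} [Group G] {n : ℕ}

theorem absorbPart {A : Fin (n + 1) → Set G} (hA : IsAbelianPartition A) {i : Fin (n + 1)}
    {k : Fin n} (hcomm : ∀ x ∈ A i, ∀ y ∈ A (i.succAbove k), x * y = y * x) :
    IsAbelianPartition (absorbPart A i k) := by
  obtain ⟨hcard, hcover, hdisj, hpart⟩ := hA
  refine ⟨fun l => ?_, iUnion_absorbPart.trans hcover, pairwise_disjoint_absorbPart hdisj,
    fun l => ?_⟩
  · rcases eq_or_ne l k with rfl | hl
    · have hfin : (A (i.succAbove l) ∪ A i).Finite :=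
        (Set.finite_of_ncard_pos (by linarith [hcard (i.succAbove l)])).union
          (Set.finite_of_ncard_pos (by linarith [hcard i]))
      simpa only [absorbPart_self] using
        (hcard _).trans (Set.ncard_le_ncard Set.subset_union_left hfin)
    · simpa only [absorbPart_of_ne hl] using hcard _
  · rcases eq_or_ne l k with rfl | hl
    · simp only [absorbPart_self]
      rintro x (hx | hx) y (hy | hy)
      · exact hpart _ x hx y hy
      · exact (hcomm y hy x hx).symm
      · exact hcomm x hx y hy
      · exact hpart i x hx y hy
    · simpa only [absorbPart_of_ne hl] using hpart (i.succAbove l)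

theorem apDegree_le {A : Fin n → Set G} (hA : IsAbelianPartition A) : apDegree G ≤ n :=
  Nat.sInf_le ⟨A, hA⟩

end IsAbelianPartition

theorem part_of_minimal_partition_not_in_center_general
    {G : Type*} [Group G]
    {m : ℕ} (hm : 3 ≤ m) (A : Fin m → Set G)
    (hA : IsAbelianPartition A) (hmin : apDegree G = m) :
    ∀ i, ¬ A i ⊆ (Subgroup.center G : Set G) := by
  obtain ⟨n, rfl⟩ : ∃ n, m = n + 1 := ⟨m - 1, by omega⟩
  intro i hcentral
  have hmerged : IsAbelianPartition (absorbPart A i ⟨0, by omega⟩) :=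
    hA.absorbPart fun x hx y _ => (Subgroup.mem_center_iff.mp (hcentral hx) y).symm
  have := hmerged.apDegree_le
  omega

theorem part_of_minimal_partition_not_in_center
    {G : Type*} [Group G] [Finite G]
    {m : ℕ} (hm : 3 ≤ m) (A : Fin m → Set G)
    (hA : IsAbelianPartition A) (hmin : apDegree G = m) :
    ∀ i, ¬ A i ⊆ (Subgroup.center G : Set G) :=
  part_of_minimal_partition_not_in_center_general hm A hA hmin
end

section
/- Let G be a finite nonabelian group admitting an abelian partition, with minimal abelian partition size m = ϑ_a(G) ≥ 3. Then there exists a minimal abelian partition A_1 ⊎ ... ⊎ A_m of G such that Z(G) is a proper subset of A_1. -/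
/-!
Fix a minimal abelian partition `B` and a noncentral element `g`. If `Z(G)` is trivial, the part
of `B` containing `1` has at least two elements and so properly contains `Z(G) = {1}`. Otherwise,
since commuting only depends on cosets of `Z(G)`, we can send every noncentral coset to the part
of `B` containing one of its representatives, and the central coset (whose elements commute with
everything) to the same part as the coset of `g`. The fibres of this assignment are commuting
unions of cosets of `Z(G)`, hence have at least `|Z(G)| ≥ 2` elements when nonempty; by
minimality of `B` none is empty, and the fibre containing `Z(G)` also contains `g`.
-/

open Subgroup

section
variable {G : Type*} [Group G]

lemma IsAbelianPartition.exists_mem {n : ℕ} {A : Fin n → Set G} (hA : IsAbelianPartition A)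
    (x : G) : ∃ i, x ∈ A i :=
  Set.mem_iUnion.1 (hA.2.1 ▸ Set.mem_univ x)

lemma IsAbelianPartition.comp_equiv {m n : ℕ} {A : Fin n → Set G} (hA : IsAbelianPartition A)
    (e : Fin m ≃ Fin n) : IsAbelianPartition (A ∘ e) := by
  obtain ⟨hsize, hcover, hdisj, hcomm⟩ := hA
  exact ⟨fun i => hsize (e i), hcover ▸ e.surjective.iUnion_comp A,
    hdisj.comp_of_injective e.injective, fun i => hcomm (e i)⟩

lemma IsAbelianPartition.center_ssubset_of_one_mem {n : ℕ} {A : Fin n → Set G}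
    (hA : IsAbelianPartition A) (hZ : center G = ⊥) {i : Fin n} (h1 : (1 : G) ∈ A i) :
    (center G : Set G) ⊂ A i := by
  rw [hZ, coe_bot]
  refine Set.ssubset_iff_subset_ne.2 ⟨Set.singleton_subset_iff.2 h1, fun h => ?_⟩
  have := hA.1 i
  rw [← h, Set.ncard_singleton] at this
  omega

lemma exists_isAbelianPartition_of_apDegree_eq {m : ℕ} (hdeg : apDegree G = m) (hm : m ≠ 0) :
    ∃ A : Fin m → Set G, IsAbelianPartition A :=
  hdeg ▸ Nat.sInf_mem (Nat.nonempty_of_pos_sInf (hdeg ▸ Nat.pos_of_ne_zero hm))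

lemma isAbelianPartition_fibers [Finite G] {n : ℕ} {f : G → Fin n} (hf : f.Surjective)
    (hcomm : ∀ x y, f x = f y → Commute x y) (hsize : ∀ x, ∃ y ≠ x, f y = f x) :
    IsAbelianPartition (fun i => f ⁻¹' {i}) := by
  refine ⟨fun i => ?_, ?_, ?_, ?_⟩
  · obtain ⟨x, rfl⟩ := hf i
    obtain ⟨y, hyx, hy⟩ := hsize x
    exact (Set.one_lt_ncard_iff (Set.toFinite _)).2 ⟨x, y, rfl, hy, hyx.symm⟩
  · rw [← Set.preimage_iUnion, Set.iUnion_of_singleton, Set.preimage_univ]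
  · exact fun i j hij => (Set.disjoint_singleton.2 hij).preimage f
  · rintro i x rfl y hy
    exact hcomm x y hy.symm

lemma apDegree_le_card_range [Finite G] {ι : Type*} {f : G → ι}
    (hcomm : ∀ x y, f x = f y → Commute x y) (hsize : ∀ x, ∃ y ≠ x, f y = f x) :
    apDegree G ≤ Nat.card (Set.range f) := by
  let f' : G → Fin _ := Finite.equivFin (Set.range f) ∘ Set.rangeFactorization f
  have hf' : ∀ x y, f' x = f' y ↔ f x = f y :=
    fun x y => (Finite.equivFin _).injective.eq_iff.trans Subtype.ext_iff
  refine Nat.sInf_le ⟨_, isAbelianPartition_fibers (f := f') ?_ ?_ ?_⟩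
  · exact (Finite.equivFin _).surjective.comp Set.rangeFactorization_surjective
  · exact fun x y h => hcomm x y ((hf' x y).1 h)
  · simpa only [hf'] using hsize

lemma isAbelianPartition_fibers_of_apDegree_eq [Finite G] {m : ℕ} (hdeg : apDegree G = m)
    {f : G → Fin m} (hcomm : ∀ x y, f x = f y → Commute x y)
    (hsize : ∀ x, ∃ y ≠ x, f y = f x) :
    IsAbelianPartition (fun i => f ⁻¹' {i}) := by
  refine isAbelianPartition_fibers (fun i => ?_) hcomm hsize
  by_contra hi
  have hlt : Nat.card (Set.range f) < Nat.card (Fin m) := Finite.card_subtype_lt hi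
  have := apDegree_le_card_range hcomm hsize
  rw [Nat.card_fin] at hlt
  omega

lemma Commute.of_mk_center {a b x y : G} (hab : Commute a b)
    (hx : (x : G ⧸ center G) = a) (hy : (y : G ⧸ center G) = b) : Commute x y := by
  obtain ⟨z, hz, rfl⟩ : ∃ z ∈ center G, x = a * z :=
    ⟨a⁻¹ * x, QuotientGroup.eq.1 hx.symm, by group⟩
  obtain ⟨w, hw, rfl⟩ : ∃ w ∈ center G, y = b * w :=
    ⟨b⁻¹ * y, QuotientGroup.eq.1 hy.symm, by group⟩
  have hzc : ∀ c, Commute c z := mem_center_iff.1 hz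
  have hwc : ∀ c, Commute c w := mem_center_iff.1 hw
  exact (hab.mul_right (hwc a)).mul_left ((hzc b).symm.mul_right (hwc z))

lemma exists_isAbelianPartition_center_ssubset [Finite G] {m : ℕ} (hdeg : apDegree G = m)
    {B : Fin m → Set G} (hB : IsAbelianPartition B) {g : G} (hg : g ∉ center G)
    {z : G} (hz : z ∈ center G) (hz1 : z ≠ 1) :
    ∃ A : Fin m → Set G, IsAbelianPartition A ∧ ∃ i, (center G : Set G) ⊂ A i := by
  classical
  choose part hpart using hB.exists_mem
  let F : G ⧸ center G → Fin m :=
    Function.update (fun q => part q.out) 1 (part (g : G ⧸ center G).out)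
  have hg1 : (g : G ⧸ center G) ≠ 1 := by rwa [Ne, QuotientGroup.eq_one_iff]
  have hF : ∀ x : G, (x : G ⧸ center G) ≠ 1 → F x = part (x : G ⧸ center G).out :=
    fun x hx => Function.update_of_ne hx _ _
  have hcomm : ∀ x y : G, F x = F y → Commute x y := by
    intro x y hxy
    by_cases hx : (x : G ⧸ center G) = 1
    · exact (mem_center_iff.1 ((QuotientGroup.eq_one_iff x).1 hx) y).symm
    by_cases hy : (y : G ⧸ center G) = 1
    · exact mem_center_iff.1 ((QuotientGroup.eq_one_iff y).1 hy) x
    rw [hF x hx, hF y hy] at hxy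
    exact Commute.of_mk_center (hB.2.2.2 _ _ (hpart _) _ (hxy ▸ hpart _))
      (QuotientGroup.out_eq' _).symm (QuotientGroup.out_eq' _).symm
  have hsize : ∀ x : G, ∃ y ≠ x, F y = F x := fun x =>
    ⟨x * z, by simpa using hz1, by rw [QuotientGroup.mk_mul, (QuotientGroup.eq_one_iff z).2 hz,
      mul_one]⟩
  refine ⟨_, isAbelianPartition_fibers_of_apDegree_eq hdeg hcomm hsize, F 1,
    (Set.ssubset_iff_of_subset fun x hx => ?_).2 ⟨g, ?_, hg⟩⟩
  · simp [(QuotientGroup.eq_one_iff x).2 hx]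
  · simp [F, hg1]

end

theorem exists_minimal_partition_with_center_in_first_part
    {G : Type*} [Group G] [Finite G]
    (hna : ∃ x y : G, x * y ≠ y * x)
    {m : ℕ} (hm : 3 ≤ m) (hdeg : apDegree G = m) :
    ∃ A : Fin m → Set G, IsAbelianPartition A ∧
      (Subgroup.center G : Set G) ⊂ A ⟨0, by omega⟩ := by
  obtain ⟨B, hB⟩ := exists_isAbelianPartition_of_apDegree_eq hdeg (by omega)
  obtain ⟨g, hg⟩ : ∃ g, g ∉ center G := by
    obtain ⟨x, y, hxy⟩ := hna
    exact ⟨x, fun hx => hxy (mem_center_iff.1 hx y).symm⟩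
  obtain ⟨A, hA, i, hZA⟩ :
      ∃ A : Fin m → Set G, IsAbelianPartition A ∧ ∃ i, (center G : Set G) ⊂ A i := by
    rcases (center G).bot_or_exists_ne_one with hZ | ⟨z, hz, hz1⟩
    · obtain ⟨i, hi⟩ := hB.exists_mem 1
      exact ⟨B, hB, i, hB.center_ssubset_of_one_mem hZ hi⟩
    · exact exists_isAbelianPartition_center_ssubset hdeg hB hg hz hz1
  exact ⟨A ∘ Equiv.swap ⟨0, by omega⟩ i, hA.comp_equiv _, by simpa using hZA⟩
end

section
/- If a finite group G admits an abelian partition, then ϑ_a(G) ≥ ⌈|G| / c(G)⌉, where c(G) is the number of conjugacy classes of G. -/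
/-!
Let `A₁, …, Aₘ` be an abelian partition of `G`. Since the parts are disjoint and cover
`G`, `∑ |Aᵢ| = |G|`; since each part commutes elementwise, the sets `Aᵢ × Aᵢ` are disjoint
sets of commuting pairs, so `∑ |Aᵢ|² ≤ |G| · c(G)` by the Erdős–Turán count of commuting
pairs.
Cauchy–Schwarz gives `|G|² ≤ m ∑ |Aᵢ|² ≤ m |G| c(G)`, i.e. `m ≥ |G| / c(G)`.
-/

open Finset Function

section Partition

variable {ι : Type*} [Fintype ι]

theorem sum_ncard_eq_card_of_iUnion_eq_univ {α : Type*} [Finite α] {A : ι → Set α}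
    (hcov : ⋃ i, A i = Set.univ) (hdisj : Pairwise (Disjoint on A)) :
    ∑ i, (A i).ncard = Nat.card α := by
  rw [← Set.ncard_univ, ← hcov, Set.ncard_iUnion_of_finite (fun _ => Set.toFinite _) hdisj,
    finsum_eq_sum_of_fintype]

theorem sum_ncard_sq_le_card_commute {M : Type*} [Mul M] [Finite M]
    {A : ι → Set M} (hdisj : Pairwise (Disjoint on A))
    (hcomm : ∀ i, ∀ x ∈ A i, ∀ y ∈ A i, x * y = y * x) :
    ∑ i, (A i).ncard ^ 2 ≤ Nat.card {p : M × M // Commute p.1 p.2} := by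
  have hdisj₂ : Pairwise (Disjoint on fun i => A i ×ˢ A i) := fun i j hij =>
    Set.disjoint_prod.2 (Or.inl (hdisj hij))
  calc ∑ i, (A i).ncard ^ 2 = (⋃ i, A i ×ˢ A i).ncard := by
        rw [Set.ncard_iUnion_of_finite (fun _ => Set.toFinite _) hdisj₂, finsum_eq_sum_of_fintype]
        simp only [Set.ncard_prod, sq]
    _ ≤ {p : M × M | Commute p.1 p.2}.ncard :=
        Set.ncard_le_ncard (Set.iUnion_subset fun i _ hp => hcomm i _ hp.1 _ hp.2)
    _ = Nat.card {p : M × M // Commute p.1 p.2} := (Nat.card_coe_set_eq _).symm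

end Partition

theorem IsAbelianPartition.card_le_mul_card_conjClasses {G : Type*} [Group G] [Finite G] {n : ℕ}
    {A : Fin n → Set G} (hA : IsAbelianPartition A) :
    Nat.card G ≤ n * Nat.card (ConjClasses G) := by
  obtain ⟨-, hcov, hdisj, hcomm⟩ := hA
  have hcs : Nat.card G ^ 2 ≤ n * (Nat.card (ConjClasses G) * Nat.card G) :=
    calc Nat.card G ^ 2 = (∑ i, (A i).ncard) ^ 2 := by
          rw [sum_ncard_eq_card_of_iUnion_eq_univ hcov hdisj]
      _ ≤ n * ∑ i, (A i).ncard ^ 2 := by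
          simpa only [card_univ, Fintype.card_fin, Nat.cast_id] using
            sq_sum_le_card_mul_sum_sq (s := univ) (f := fun i => (A i).ncard)
      _ ≤ n * (Nat.card (ConjClasses G) * Nat.card G) := by
          rw [← card_comm_eq_card_conjClasses_mul_card]
          exact Nat.mul_le_mul_left n (sum_ncard_sq_le_card_commute hdisj hcomm)
  rw [sq, ← mul_assoc] at hcs
  exact Nat.le_of_mul_le_mul_right hcs Nat.card_pos

theorem apDegree_ge_card_div_conjClasses
    {G : Type*} [Group G] [Finite G]
    (hap : ∃ (n : ℕ) (A : Fin n → Set G), IsAbelianPartition A) :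
    ⌈(Nat.card G : ℚ) / (Nat.card (ConjClasses G) : ℚ)⌉ ≤ (apDegree G : ℤ) := by
  obtain ⟨A, hA⟩ : ∃ A : Fin (apDegree G) → Set G, IsAbelianPartition A :=
    Nat.sInf_mem hap
  have hc : (0 : ℚ) < Nat.card (ConjClasses G) := by exact_mod_cast Nat.card_pos
  rw [Int.ceil_le, div_le_iff₀ hc]
  exact_mod_cast hA.card_le_mul_card_conjClasses
end

section
/- Let G = A_1 ⊎ ... ⊎ A_m be an abelian partition of a finite group G, and let s be the minimal size among the parts A_i. Then s ≤ c(G), the number of conjugacy classes of G. -/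
/-!
Every element `x` lies in some part, and that part commutes with `x`, so the centralizer of `x`
has at least `s` elements. Summing over `x`, the number of commuting pairs is at least `s |G|`;
but by Burnside's lemma for the conjugation action it equals `c(G) |G|`.
-/

open Subgroup

theorem sum_card_centralizer_eq_card_conjClasses_mul_card (G : Type*) [Group G] [Fintype G] :
    ∑ x : G, Nat.card (centralizer {x}) = Nat.card (ConjClasses G) * Nat.card G := by
  rw [← card_comm_eq_card_conjClasses_mul_card,
    Nat.card_congr (Equiv.subtypeProdEquivSigmaSubtype Commute), Nat.card_sigma]
  refine Fintype.sum_congr _ _ fun x ↦ Nat.card_congr (Equiv.subtypeEquivRight fun y ↦ ?_)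
  rw [mem_centralizer_singleton_iff]
  exact eq_comm

theorem le_card_conjClasses_of_forall_le_card_centralizer {G : Type*} [Group G] [Finite G]
    {s : ℕ} (h : ∀ x : G, s ≤ Nat.card (centralizer {x})) : s ≤ Nat.card (ConjClasses G) := by
  have := Fintype.ofFinite G
  refine Nat.le_of_mul_le_mul_right ?_ (Nat.card_pos (α := G))
  calc s * Nat.card G = ∑ _x : G, s := by simp [mul_comm]
    _ ≤ ∑ x : G, Nat.card (centralizer {x}) := Finset.sum_le_sum fun x _ ↦ h x
    _ = Nat.card (ConjClasses G) * Nat.card G := sum_card_centralizer_eq_card_conjClasses_mul_card G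

theorem IsAbelianPartition.exists_subset_centralizer {G : Type*} [Group G] {n : ℕ}
    {A : Fin n → Set G} (hA : IsAbelianPartition A) (x : G) :
    ∃ i, A i ⊆ centralizer {x} := by
  obtain ⟨i, hxi⟩ := Set.mem_iUnion.mp (hA.2.1 ▸ Set.mem_univ x)
  exact ⟨i, fun y hy ↦ mem_centralizer_singleton_iff.mpr (hA.2.2.2 i y hy x hxi)⟩

theorem min_part_size_le_card_conjClasses_general
    {G : Type*} [Group G] [Finite G]
    {m : ℕ} (A : Fin m → Set G) (hA : IsAbelianPartition A)
    (s : ℕ) (hs_min : ∀ i, s ≤ (A i).ncard) :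
    s ≤ Nat.card (ConjClasses G) := by
  refine le_card_conjClasses_of_forall_le_card_centralizer fun x ↦ ?_
  obtain ⟨i, hAi⟩ := hA.exists_subset_centralizer x
  calc s ≤ (A i).ncard := hs_min i
    _ ≤ Nat.card (centralizer {x}) := by
      rw [← Nat.card_coe_set_eq]
      exact Set.ncard_le_ncard hAi (Set.toFinite _)

theorem min_part_size_le_card_conjClasses
    {G : Type*} [Group G] [Finite G]
    {m : ℕ} (A : Fin m → Set G) (hA : IsAbelianPartition A)
    (s : ℕ) (hs_mem : ∃ i, (A i).ncard = s) (hs_min : ∀ i, s ≤ (A i).ncard) :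
    s ≤ Nat.card (ConjClasses G) :=
  min_part_size_le_card_conjClasses_general A hA s hs_min
end

section
/- Let G be a finite nonabelian AC-group (every noncentral element has abelian centralizer) in which every centralizer has order at least 3. Then G admits an abelian partition and ϑ_a(G) = n(G), the maximal size of a noncommuting set in G. -/
/-!
In an AC-group two noncentral elements commute exactly when they have the same centralizer, so
the sets `C(x) \ Z(G)` for noncentral `x` partition `G \ Z(G)` into commuting blocks, one per
distinct centralizer; a block has at least two elements because `Z(G)` has index at least 2
in `C(x)` and `|C(x)| ≥ 3`. Choosing one element from each block gives a noncommuting set, while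
merging `Z(G)` into one block gives an abelian partition with the same number of parts. Since the
elements of a noncommuting set lie in pairwise different parts of any abelian partition, both
numbers equal the number of distinct centralizers of noncentral elements.
-/

open Subgroup

section AbelianPartition

variable {G : Type*} [Group G]

theorem IsAbelianPartition.ncard_le {n : ℕ} {A : Fin n → Set G} (hA : IsAbelianPartition A)
    {S : Set G} (hS : S.Pairwise fun x y => x * y ≠ y * x) : S.ncard ≤ n := by
  have hcover : ∀ s : S, ∃ i, (s : G) ∈ A i := fun s =>
    Set.mem_iUnion.1 (hA.2.1 ▸ Set.mem_univ _)
  choose f hf using hcover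
  have hf_inj : f.Injective := fun s t hst => Subtype.ext <| by
    by_contra hne
    exact hS s.2 t.2 hne (hA.2.2.2 (f s) s (hf s) t (hst ▸ hf t))
  simpa [Nat.card_coe_set_eq] using Nat.card_le_card_of_injective f hf_inj

theorem apDegree_eq_maxNoncommuting_of_ncard_eq {n : ℕ} {A : Fin n → Set G}
    (hA : IsAbelianPartition A) {S : Set G} (hS : S.Pairwise fun x y => x * y ≠ y * x)
    (hSn : S.ncard = n) : apDegree G = maxNoncommuting G := by
  have hapDegree : apDegree G = n := by
    refine le_antisymm (Nat.sInf_le ⟨A, hA⟩) ?_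
    obtain ⟨B, hB⟩ := Nat.sInf_mem (⟨n, A, hA⟩ :
      {m | ∃ B : Fin m → Set G, IsAbelianPartition B}.Nonempty)
    exact hSn ▸ hB.ncard_le hS
  have hmaxNoncommuting : maxNoncommuting G = n := by
    refine le_antisymm (csSup_le ⟨n, S, hSn, hS⟩ ?_) (le_csSup ⟨n, ?_⟩ ⟨S, hSn, hS⟩) <;>
      rintro _ ⟨T, rfl, hT⟩ <;> exact hA.ncard_le hT
  rw [hapDegree, hmaxNoncommuting]

theorem isAbelianPartition_update_union_center [Finite G] {n : ℕ} {B : Fin n → Set G}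
    (hB_card : ∀ i, 2 ≤ (B i).ncard) (hB_cover : ⋃ i, B i = (center G : Set G)ᶜ)
    (hB_disj : Pairwise (Function.onFun Disjoint B))
    (hB_comm : ∀ i, ∀ x ∈ B i, ∀ y ∈ B i, x * y = y * x)
    (i₀ : Fin n) : IsAbelianPartition (Function.update B i₀ (B i₀ ∪ center G)) := by
  have hB_center : ∀ i, Disjoint (B i) (center G) := fun i =>
    Set.subset_compl_iff_disjoint_right.1 (hB_cover ▸ Set.subset_iUnion B i)
  have hmem : ∀ i g, g ∈ Function.update B i₀ (B i₀ ∪ center G) i ↔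
      g ∈ B i ∨ i = i₀ ∧ g ∈ center G := by
    intro i g
    rcases eq_or_ne i i₀ with rfl | hi <;> simp [*]
  refine ⟨fun i => ?_, ?_, fun i j hij => ?_, fun i x hx y hy => ?_⟩
  · exact (hB_card i).trans (Set.ncard_le_ncard fun g hg => (hmem i g).2 (.inl hg))
  · refine Set.eq_univ_of_forall fun g => Set.mem_iUnion.2 ?_
    by_cases hg : g ∈ center G
    · exact ⟨i₀, (hmem i₀ g).2 (.inr ⟨rfl, hg⟩)⟩
    · obtain ⟨i, hi⟩ := Set.mem_iUnion.1 (hB_cover.symm ▸ hg : g ∈ ⋃ i, B i)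
      exact ⟨i, (hmem i g).2 (.inl hi)⟩
  · refine Set.disjoint_left.2 fun g hgi hgj => ?_
    rcases (hmem i g).1 hgi with hBi | ⟨rfl, hZ⟩ <;>
      rcases (hmem j g).1 hgj with hBj | ⟨rfl, hZ⟩
    exacts [Set.disjoint_left.1 (hB_disj hij) hBi hBj, Set.disjoint_left.1 (hB_center i) hBi hZ,
      Set.disjoint_left.1 (hB_center j) hBj hZ, hij rfl]
  · by_cases hxZ : x ∈ center G
    · exact (mem_center_iff.1 hxZ y).symm
    by_cases hyZ : y ∈ center G
    · exact mem_center_iff.1 hyZ x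
    exact hB_comm i x (((hmem i x).1 hx).resolve_right (hxZ ·.2))
      y (((hmem i y).1 hy).resolve_right (hyZ ·.2))

end AbelianPartition

section Centralizers

variable {G : Type*} [Group G]

theorem two_le_ncard_sdiff_of_lt [Finite G] {H K : Subgroup G} (hHK : H < K)
    (hK : 3 ≤ Nat.card K) : 2 ≤ ((K : Set G) \ H).ncard := by
  obtain ⟨k, hk⟩ := card_dvd_of_le hHK.le
  have hk1 : k ≠ 1 := by
    rintro rfl
    exact hHK.ne (eq_of_le_of_card_ge hHK.le (by simp [hk]))
  have hH : 0 < Nat.card H := Nat.card_pos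
  have h2H : 2 * Nat.card H ≤ Nat.card K := by
    rcases k with _ | _ | k
    · omega
    · exact absurd rfl hk1
    · rw [hk]; nlinarith
  rw [Set.ncard_sdiff hHK.le]
  simp only [← Nat.card_coe_set_eq, SetLike.coe_sort_coe]
  omega

theorem center_lt_centralizer_singleton {x : G} (hx : x ∉ center G) :
    center G < centralizer {x} :=
  lt_of_le_of_ne (center_le_centralizer _) fun h =>
    hx (h ▸ mem_centralizer_singleton_iff.2 rfl)

theorem exists_centralizer_representatives [Finite G] :
    ∃ (m : ℕ) (w : Fin m → G), (∀ i, w i ∉ center G) ∧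
      (fun i => centralizer {w i}).Injective ∧
      ∀ g ∉ center G, ∃ i, centralizer {g} = centralizer {w i} := by
  let e := Finite.equivFin ((fun x : G => centralizer {x}) '' (center G : Set G)ᶜ)
  have he : ∀ i, ∃ x ∉ center G, centralizer {x} = e.symm i := fun i => (e.symm i).2
  choose w hw_nc hw using he
  refine ⟨_, w, hw_nc, fun i j hij => e.symm.injective (Subtype.ext ?_), fun g hg => ?_⟩
  · rw [← hw, ← hw]
    exact hij
  · exact ⟨e ⟨_, g, hg, rfl⟩, by rw [hw, e.symm_apply_apply]⟩

end Centralizers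

def IsACGroup (G : Type*) [Group G] : Prop :=
  ∀ x : G, x ∉ center G → ∀ a ∈ centralizer {x}, ∀ b ∈ centralizer {x}, a * b = b * a

namespace IsACGroup

variable {G : Type*} [Group G]

theorem centralizer_eq (hG : IsACGroup G) {x y : G} (hx : x ∉ center G) (hy : y ∉ center G)
    (hxy : x * y = y * x) : centralizer {x} = centralizer {y} := by
  have hy_mem : y ∈ centralizer {x} := mem_centralizer_singleton_iff.2 hxy.symm
  have hx_mem : x ∈ centralizer {y} := mem_centralizer_singleton_iff.2 hxy
  refine le_antisymm (fun a ha => ?_) (fun a ha => ?_) <;>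
    rw [mem_centralizer_singleton_iff]
  exacts [hG x hx a ha y hy_mem, hG y hy a ha x hx_mem]

theorem disjoint_centralizer_sdiff_center (hG : IsACGroup G) {x y : G} (hx : x ∉ center G)
    (hy : y ∉ center G) (hxy : centralizer {x} ≠ centralizer {y}) :
    Disjoint ((centralizer {x} : Set G) \ center G) ((centralizer {y} : Set G) \ center G) := by
  refine Set.disjoint_left.2 fun g ⟨hgx, hg⟩ ⟨hgy, _⟩ => hxy ?_
  rw [SetLike.mem_coe, mem_centralizer_singleton_iff] at hgx hgy
  rw [hG.centralizer_eq hx hg hgx.symm, hG.centralizer_eq hy hg hgy.symm]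

theorem exists_isAbelianPartition_and_pairwise_not_commute [Finite G] (hG : IsACGroup G)
    (h3 : ∀ x ∉ center G, 3 ≤ Nat.card (centralizer ({x} : Set G)))
    (hna : ∃ x y : G, x * y ≠ y * x) :
    ∃ (n : ℕ) (A : Fin n → Set G) (S : Set G), IsAbelianPartition A ∧
      S.Pairwise (fun x y => x * y ≠ y * x) ∧ S.ncard = n := by
  obtain ⟨m, w, hw_nc, hw_inj, hw_cover⟩ := exists_centralizer_representatives (G := G)
  obtain ⟨x₀, y₀, hx₀y₀⟩ := hna
  obtain ⟨i₀, -⟩ := hw_cover x₀ fun h => hx₀y₀ (mem_center_iff.1 h y₀).symm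
  set B : Fin m → Set G := fun i => (centralizer {w i} : Set G) \ center G
  have hB_cover : ⋃ i, B i = (center G : Set G)ᶜ := by
    refine Set.Subset.antisymm (Set.iUnion_subset fun i => Set.sdiff_subset_compl _ _)
      fun g hg => ?_
    obtain ⟨i, hi⟩ := hw_cover g hg
    exact Set.mem_iUnion.2 ⟨i, hi ▸ mem_centralizer_singleton_iff.2 rfl, hg⟩
  have hS : (Set.range w).Pairwise fun x y => x * y ≠ y * x := by
    rintro _ ⟨i, rfl⟩ _ ⟨j, rfl⟩ hne hcomm
    exact hne (congrArg w (hw_inj (hG.centralizer_eq (hw_nc i) (hw_nc j) hcomm)))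
  refine ⟨m, _, Set.range w, isAbelianPartition_update_union_center (B := B)
    (fun i => two_le_ncard_sdiff_of_lt (center_lt_centralizer_singleton (hw_nc i))
      (h3 _ (hw_nc i))) hB_cover
    (fun i j hij => hG.disjoint_centralizer_sdiff_center (hw_nc i) (hw_nc j) (hw_inj.ne hij))
    (fun i x hx y hy => hG (w i) (hw_nc i) x hx.1 y hy.1) i₀, hS, ?_⟩
  rw [Set.ncard_range_of_injective (hw_inj.of_comp (f := fun x => centralizer {x})), Nat.card_fin]

end IsACGroup

theorem AC_group_apDegree_eq_maxNoncommuting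
    {G : Type*} [Group G] [Finite G]
    (hna : ∃ x y : G, x * y ≠ y * x)
    (hAC : ∀ x : G, x ∉ Subgroup.center G →
      ∀ a ∈ Subgroup.centralizer {x}, ∀ b ∈ Subgroup.centralizer {x}, a * b = b * a)
    (h3 : ∀ x : G, 3 ≤ Nat.card (Subgroup.centralizer ({x} : Set G))) :
    (∃ (n : ℕ) (A : Fin n → Set G), IsAbelianPartition A) ∧
      apDegree G = maxNoncommuting G := by
  obtain ⟨n, A, S, hA, hS, hSn⟩ :=
    IsACGroup.exists_isAbelianPartition_and_pairwise_not_commute hAC (fun x _ => h3 x) hna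
  exact ⟨⟨n, A, hA⟩, apDegree_eq_maxNoncommuting_of_ncard_eq hA hS hSn⟩
end

section
/- If G is a finite group containing an involution x with C_G(x) = ⟨x⟩, then G has a Sylow 2-subgroup of order 2 and G is a Frobenius group with Frobenius complement ⟨x⟩ of order 2 and Frobenius kernel the normal 2-complement of G. -/
/-!
Since `x` is the only involution of `⟨x⟩`, every element normalizing `⟨x⟩` centralizes `x`, so
`⟨x⟩` is self-normalizing. A self-normalizing `p`-subgroup is a Sylow subgroup, because inside the
nilpotent Sylow subgroup containing it normalizers grow. A self-normalizing subgroup of prime order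
meets each of its other conjugates trivially, since a conjugate it meets nontrivially contains it,
hence equals it. Finally, `N_G(⟨x⟩) = ⟨x⟩` is abelian, so Burnside's transfer theorem gives a
normal complement, of odd order since `⟨x⟩` is a Sylow `2`-subgroup.
-/

open Subgroup Pointwise

namespace Subgroup

variable {G : Type*} [Group G]

theorem normalizer_zpowers_le_centralizer_of_orderOf_eq_two {x : G} (hx : orderOf x = 2) :
    normalizer (zpowers x : Set G) ≤ centralizer {x} := by
  intro g hg
  obtain ⟨k, hk : x ^ k = g * x * g⁻¹⟩ := (mem_normalizer_iff.mp hg x).mp (mem_zpowers x)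
  rw [← zpow_mod_orderOf, hx, Nat.cast_ofNat] at hk
  rw [mem_centralizer_singleton_iff]
  rcases Int.emod_two_eq_zero_or_one k with h | h <;> rw [h] at hk
  · rw [zpow_zero, eq_comm, conj_eq_one_iff] at hk
    exact absurd (orderOf_eq_one_iff.mpr hk) (by omega)
  · rw [zpow_one, eq_comm, mul_inv_eq_iff_eq_mul] at hk
    exact hk

theorem inf_conj_smul_eq_bot_of_normalizer_le {H : Subgroup G} (hp : (Nat.card H).Prime)
    (hH : normalizer (H : Set G) ≤ H) {g : G} (hg : g ∉ H) : H ⊓ MulAut.conj g • H = ⊥ := by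
  have : Finite H := Nat.finite_of_card_ne_zero hp.ne_zero
  have : Finite (MulAut.conj g • H : Subgroup G) := .of_equiv _ (equivSMul _ H).toEquiv
  rcases hp.eq_one_or_self_of_dvd _ (card_dvd_of_le inf_le_left) with h | h
  · exact card_eq_one.mp h
  · have hle : H ≤ MulAut.conj g • H := inf_eq_left.mp (eq_of_le_of_card_ge inf_le_left h.ge)
    have hcard : Nat.card (MulAut.conj g • H : Subgroup G) ≤ Nat.card H :=
      (Nat.card_congr (equivSMul _ H).toEquiv).ge
    exact absurd (hH (mem_normalizer_iff_map_conj_eq.mpr (eq_of_le_of_card_ge hle hcard).symm)) hg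

end Subgroup

theorem IsPGroup.exists_sylow_eq_of_normalizer_le {G : Type*} [Group G] [Finite G] {p : ℕ}
    [Fact p.Prime] {H : Subgroup G} (hH : IsPGroup p H) (hN : normalizer (H : Set G) ≤ H) :
    ∃ P : Sylow p G, (P : Subgroup G) = H := by
  obtain ⟨P, hHP⟩ := hH.exists_le_sylow
  refine ⟨P, le_antisymm ?_ hHP⟩
  have := P.isPGroup'.isNilpotent
  have hself : normalizer (H.subgroupOf P : Set P) = H.subgroupOf P :=
    le_antisymm (subgroupOf_normalizer_eq hHP ▸ fun _ hy => hN hy) le_normalizer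
  exact subgroupOf_eq_top.mp <| normalizerCondition_iff_only_full_group_self_normalizing.mp
    Group.normalizerCondition_of_isNilpotent _ hself

open Pointwise in
theorem self_centralizing_involution_frobenius
    {G : Type*} [Group G] [Finite G] (x : G)
    (hx1 : x ≠ 1) (hx2 : x * x = 1)
    (hc : Subgroup.centralizer {x} = Subgroup.zpowers x) :
    (∃ P : Sylow 2 G, Nat.card P = 2) ∧
      (∀ g : G, g ∉ Subgroup.zpowers x →
        Subgroup.zpowers x ⊓ (MulAut.conj g • Subgroup.zpowers x) = ⊥) ∧
      ∃ N : Subgroup G, N.Normal ∧ Odd (Nat.card N) ∧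
        Nat.card N * 2 = Nat.card G ∧
        N ⊓ Subgroup.zpowers x = ⊥ ∧ N ⊔ Subgroup.zpowers x = ⊤ := by
  have hord : orderOf x = 2 := orderOf_eq_prime (by rwa [sq]) hx1
  have hcard : Nat.card (zpowers x) = 2 := by rw [Nat.card_zpowers, hord]
  have hself : normalizer (zpowers x : Set G) ≤ zpowers x :=
    hc ▸ normalizer_zpowers_le_centralizer_of_orderOf_eq_two hord
  obtain ⟨P, hP⟩ :=
    (IsPGroup.of_card (p := 2) (n := 1) (by rw [hcard, pow_one])).exists_sylow_eq_of_normalizer_le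
      hself
  have hNC : normalizer ((P : Subgroup G) : Set G) ≤ centralizer ((P : Subgroup G) : Set G) := by
    rw [hP]; exact hself.trans (le_centralizer _)
  have hPcard : Nat.card P = 2 := hP ▸ hcard
  have hcompl := MonoidHom.ker_transferSylow_isComplement' P hNC
  refine ⟨⟨P, hPcard⟩,
    fun g hg => inf_conj_smul_eq_bot_of_normalizer_le (hcard ▸ Nat.prime_two) hself hg,
    _, (MonoidHom.transferSylow P hNC).normal_ker, ?_, ?_, ?_, ?_⟩
  · exact Nat.odd_iff.mpr (Nat.two_dvd_ne_zero.mp (MonoidHom.not_dvd_card_ker_transferSylow P hNC))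
  · simpa only [hPcard] using hcompl.card_mul_card
  · rw [← hP]; exact disjoint_iff.mp hcompl.disjoint
  · rw [← hP]; exact hcompl.sup_eq_top
end

section
/- Let G = D_{2k₁} × D_{2k₂} × ... × D_{2kₜ} be a direct product of dihedral groups of orders 2k_i with each k_i odd, and suppose (k₁+1)(k₂+1)···(kₜ+1) − 2·k₁k₂···kₜ < 0. Then G does not admit an abelian partition. -/
/-!
In an abelian partition every element `x` lies in a part of size at least two, so it has a
*mate*: another element of its part, which commutes with `x`. If the elements of a set `X`
pairwise do not commute, then two of them never share a part, so their mates lie in different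
parts and are distinct; moreover no mate lies in `X`. Hence `|X|` is at most the number of
elements outside `X` commuting with some element of `X`.

For odd `k`, the reflection `sr a` of `D_{2k}` commutes only with `1` and itself. Take for `X`
the `∏ kᵢ` diagonal involutions (tuples of reflections): distinct ones never commute, and
everything commuting with one of them has every coordinate equal to `1` or a reflection. This
leaves `∏ (kᵢ + 1) - ∏ kᵢ` candidate mates, fewer than `∏ kᵢ` by hypothesis.
-/

open Finset

namespace IsAbelianPartition

variable {G : Type*} [Group G] {n : ℕ} {A : Fin n → Set G}

theorem exists_mem_s18 (hA : IsAbelianPartition A) (x : G) : ∃ i, x ∈ A i :=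
  Set.mem_iUnion.mp (hA.2.1 ▸ Set.mem_univ x)

theorem exists_ne_mem (hA : IsAbelianPartition A) (i : Fin n) (x : G) : ∃ y ∈ A i, y ≠ x :=
  Set.exists_ne_of_one_lt_ncard (hA.1 i) x

theorem commute (hA : IsAbelianPartition A) {i : Fin n} {x y : G} (hx : x ∈ A i)
    (hy : y ∈ A i) : Commute x y :=
  hA.2.2.2 i x hx y hy

theorem card_le_card_of_pairwise_not_commute (hA : IsAbelianPartition A) {X M : Finset G}
    (hX : (X : Set G).Pairwise fun x y => ¬Commute x y)
    (hM : ∀ x ∈ X, ∀ y ∉ X, Commute y x → y ∈ M) : #X ≤ #M := by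
  choose part mem_part using hA.exists_mem_s18
  choose mate mate_mem mate_ne using fun x => hA.exists_ne_mem (part x) x
  have commute_mate (x : G) : Commute (mate x) x := hA.commute (mate_mem x) (mem_part x)
  have mate_notMem {x : G} (hx : x ∈ X) : mate x ∉ X := fun hmx =>
    hX hmx hx (mate_ne x) (commute_mate x)
  refine card_le_card_of_injOn mate (fun x hx => hM x hx _ (mate_notMem hx) (commute_mate x)) ?_
  intro x hx x' hx' hmate
  have same_part : part x = part x' := by
    by_contra hne
    exact Set.disjoint_left.mp (hA.2.2.1 hne) (mate_mem x) (hmate ▸ mate_mem x')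
  by_contra hne
  exact hX hx hx' hne (hA.commute (mem_part x) (same_part ▸ mem_part x'))

end IsAbelianPartition

namespace DihedralGroup

variable {n : ℕ}

theorem eq_one_or_eq_sr_of_commute_sr (hn : Odd n) {y : DihedralGroup n} {a : ZMod n}
    (h : Commute y (sr a)) : y = 1 ∨ y = sr a := by
  have h := h.eq
  rcases y with b | b
  · rw [r_mul_sr, sr_mul_r, sr.injEq] at h
    have : b + b = 0 := by linear_combination -h
    rw [ZMod.add_self_eq_zero_iff_eq_zero hn] at this
    exact .inl (by rw [this, r_zero])
  · rw [sr_mul_sr, sr_mul_sr, r.injEq] at h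
    have : (b - a) + (b - a) = 0 := by linear_combination -h
    rw [ZMod.add_self_eq_zero_iff_eq_zero hn, sub_eq_zero] at this
    exact .inr (by rw [this])

theorem sr_commute_sr_iff (hn : Odd n) {a b : ZMod n} : Commute (sr a) (sr b) ↔ a = b := by
  refine ⟨fun h => ?_, fun h => h ▸ Commute.refl _⟩
  rcases eq_one_or_eq_sr_of_commute_sr hn h with h | h
  · exact absurd h (by simp [one_def, -r_zero])
  · exact sr.inj h

variable (n) [NeZero n]

def reflections : Finset (DihedralGroup n) :=
  univ.image sr

variable {n}

@[simp]
theorem mem_reflections {x : DihedralGroup n} : x ∈ reflections n ↔ ∃ a, sr a = x := by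
  simp [reflections]

theorem card_reflections : #(reflections n) = n := by
  rw [reflections, card_image_of_injective _ fun _ _ => sr.inj, card_univ, ZMod.card]

theorem one_notMem_reflections : (1 : DihedralGroup n) ∉ reflections n := by
  simp [one_def, -r_zero]

end DihedralGroup

open DihedralGroup

section DiagonalInvolutions

variable {ι : Type*} [Fintype ι] [DecidableEq ι] {k : ι → ℕ} [∀ i, NeZero (k i)]

variable (k) in
def diagonalInvolutions : Finset (∀ i, DihedralGroup (k i)) :=
  Fintype.piFinset fun i => reflections (k i)

theorem card_diagonalInvolutions : #(diagonalInvolutions k) = ∏ i, k i := by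
  simp only [diagonalInvolutions, Fintype.card_piFinset, card_reflections]

theorem pairwise_not_commute_diagonalInvolutions (hk : ∀ i, Odd (k i)) :
    (diagonalInvolutions k : Set (∀ i, DihedralGroup (k i))).Pairwise
      fun x y => ¬Commute x y := by
  intro x hx y hy hne hxy
  obtain ⟨i, hi⟩ := Function.ne_iff.mp hne
  obtain ⟨a, ha⟩ := mem_reflections.mp (Fintype.mem_piFinset.mp hx i)
  obtain ⟨b, hb⟩ := mem_reflections.mp (Fintype.mem_piFinset.mp hy i)
  have hab : Commute (sr a) (sr b) := ha ▸ hb ▸ Pi.commute_iff.mp hxy i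
  exact hi (ha ▸ hb ▸ congrArg sr ((sr_commute_sr_iff (hk i)).mp hab))

theorem mem_piFinset_of_commute_mem_diagonalInvolutions (hk : ∀ i, Odd (k i))
    {x y : ∀ i, DihedralGroup (k i)} (hx : x ∈ diagonalInvolutions k) (hyx : Commute y x) :
    y ∈ Fintype.piFinset fun i => insert 1 (reflections (k i)) := by
  refine Fintype.mem_piFinset.mpr fun i => ?_
  obtain ⟨a, ha⟩ := mem_reflections.mp (Fintype.mem_piFinset.mp hx i)
  rcases eq_one_or_eq_sr_of_commute_sr (hk i) (ha ▸ Pi.commute_iff.mp hyx i) with h | h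
  · exact h ▸ mem_insert_self _ _
  · exact mem_insert_of_mem (mem_reflections.mpr ⟨a, h.symm⟩)

end DiagonalInvolutions

theorem product_of_dihedral_groups_NAP
    (t : ℕ) (k : Fin t → ℕ) (hk : ∀ i, Odd (k i))
    (h : ∏ i, (k i + 1) < 2 * ∏ i, k i) :
    ¬ ∃ (n : ℕ) (A : Fin n → Set (∀ i, DihedralGroup (k i))), IsAbelianPartition A := by
  rintro ⟨n, A, hA⟩
  have : ∀ i, NeZero (k i) := fun i => ⟨(hk i).pos.ne'⟩
  set X := diagonalInvolutions k
  set T := Fintype.piFinset fun i => insert 1 (reflections (k i))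
  have hXT : X ⊆ T := Fintype.piFinset_subset _ _ fun i => subset_insert _ _
  have hcard : #X ≤ #(T \ X) :=
    hA.card_le_card_of_pairwise_not_commute (pairwise_not_commute_diagonalInvolutions hk)
      fun x hx y hy hyx =>
        mem_sdiff.mpr ⟨mem_piFinset_of_commute_mem_diagonalInvolutions hk hx hyx, hy⟩
  rw [card_sdiff_of_subset hXT, Fintype.card_piFinset, card_diagonalInvolutions] at hcard
  simp only [card_insert_of_notMem one_notMem_reflections, card_reflections] at hcard
  omega
end
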